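/- For every integer n ≥ 2, δ_n² − (k_n(1, π/n))² = −4·δ_{2n}·(δ_{2n} − δ_n). -/

import Mathlib

/-!
At `x = 1` the half-angle formula `1 - cos 2b = 2 sin² b` collapses the summand of `h_n` to
`1 / (4 |sin b|)` with `b = π(2l+1)/(2n)`, so `h_n(1, π/n)` is the cosecant sum over the odd
multiples of `π/(2n)`, divided by `4n`. The cosecant sum defining `δ_{2n}` splits into its even
multiples, which give `δ_n`, and these odd ones; hence `k_n(1, π/n) = 2 δ_{2n} - δ_n`, and the
identity is `δ² - (2a - δ)² = -4a(a - δ)`.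
-/

open Finset Real

/-- `δ_n = (1/(4n))·∑_{l=1}^{n−1} 1/sin(πl/n) − 1`. -/
noncomputable def deltaN (n : ℕ) : ℝ :=
  (1 / (4 * (n : ℝ))) * ∑ l ∈ Finset.Icc 1 (n - 1), 1 / Real.sin (Real.pi * l / n) - 1

/-- `h_n(x,θ) = (1/n)·∑_{l=1}^{n} (1 − x·cos(2πl/n + θ))/(1 + x² − 2x·cos(2πl/n + θ))^{3/2}`. -/
noncomputable def hN (n : ℕ) (x θ : ℝ) : ℝ :=
  (1 / (n : ℝ)) * ∑ l ∈ Finset.Icc 1 n,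
    (1 - x * Real.cos (2 * Real.pi * l / n + θ)) /
      (1 + x ^ 2 - 2 * x * Real.cos (2 * Real.pi * l / n + θ)) ^ ((3 : ℝ) / 2)

/-- `k_n(x,θ) = h_n(x,θ) − 1`. -/
noncomputable def kN (n : ℕ) (x θ : ℝ) : ℝ := hN n x θ - 1

theorem Finset.sum_range_two_mul {M : Type*} [AddCommMonoid M] (f : ℕ → M) (n : ℕ) :
    ∑ m ∈ range (2 * n), f m = ∑ j ∈ range n, f (2 * j) + ∑ j ∈ range n, f (2 * j + 1) := by
  induction n with
  | zero => simp
  | succ k ih =>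
    rw [show 2 * (k + 1) = 2 * k + 1 + 1 by ring, sum_range_succ, sum_range_succ, ih,
      sum_range_succ, sum_range_succ]
    abel

theorem Finset.sum_Icc_one_eq_sum_range {M : Type*} [AddCancelCommMonoid M] {f : ℕ → M} {n : ℕ}
    (hf : f n = f 0) : ∑ l ∈ Icc 1 n, f l = ∑ l ∈ range n, f l := by
  have hshift : ∑ l ∈ Icc 1 n, f l = ∑ l ∈ range n, f (l + 1) := by
    rw [← Ico_add_one_right_eq_Icc, sum_Ico_eq_sum_range, Nat.add_sub_cancel]
    simp only [add_comm 1]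
  apply add_right_cancel (b := f 0)
  rw [hshift, ← sum_range_succ', sum_range_succ, hf]

theorem Real.one_sub_cos_two_mul_div_rpow (b : ℝ) :
    (1 - cos (2 * b)) / (2 - 2 * cos (2 * b)) ^ ((3 : ℝ) / 2) = 1 / (4 * |sin b|) := by
  have hhalf : 1 - cos (2 * b) = 2 * |sin b| ^ 2 := by
    rw [sq_abs, sin_sq_eq_half_sub]
    ring
  have hcube : (2 - 2 * cos (2 * b)) ^ ((3 : ℝ) / 2) = (2 * |sin b|) ^ 3 := by
    rw [show 2 - 2 * cos (2 * b) = (2 * |sin b|) ^ 2 by linear_combination 2 * hhalf,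
      ← rpow_natCast_mul (by positivity)]
    norm_num
  rw [hhalf, hcube]
  field_simp
  ring

theorem Real.abs_sin_pi_mul_div_of_le {m N : ℕ} (h : m ≤ N) :
    |sin (π * m / N)| = sin (π * m / N) := by
  refine abs_of_nonneg (sin_nonneg_of_nonneg_of_le_pi (by positivity) ?_)
  rw [mul_div_assoc]
  exact mul_le_of_le_one_right pi_pos.le (div_le_one_of_le₀ (Nat.cast_le.mpr h) N.cast_nonneg)

-- The term `m = 0` is `1 / |sin 0| = 1 / 0 = 0`.
noncomputable def cscSum (N : ℕ) : ℝ := ∑ m ∈ range N, 1 / |sin (π * m / N)|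

noncomputable def oddCscSum (n : ℕ) : ℝ := ∑ j ∈ range n, 1 / |sin (π * (2 * j + 1) / (2 * n))|

theorem deltaN_eq_cscSum (N : ℕ) : deltaN N = cscSum N / (4 * N) - 1 := by
  have hsum : ∑ l ∈ Icc 1 (N - 1), 1 / sin (π * l / N) = cscSum N :=
    calc ∑ l ∈ Icc 1 (N - 1), 1 / sin (π * l / N)
        = ∑ l ∈ Icc 1 (N - 1), 1 / |sin (π * l / N)| :=
          sum_congr rfl fun l hl => by rw [abs_sin_pi_mul_div_of_le (by grind)]
      _ = cscSum N := by
          refine sum_subset (fun l hl => by grind) fun l _ hl => ?_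
          obtain rfl : l = 0 := by grind
          simp
  rw [deltaN, hsum]
  ring

theorem cscSum_two_mul (n : ℕ) : cscSum (2 * n) = cscSum n + oddCscSum n := by
  rw [cscSum, sum_range_two_mul, cscSum, oddCscSum]
  congr 1 <;> refine sum_congr rfl fun j _ => ?_ <;> push_cast <;> ring_nf

theorem hN_one_pi_div (n : ℕ) : hN n 1 (π / n) = oddCscSum n / (4 * n) := by
  set f : ℕ → ℝ := fun l => 1 / |sin (π * (2 * l + 1) / (2 * n))|
  have hterm (l : ℕ) : (1 - 1 * cos (2 * π * l / n + π / n)) /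
      (1 + 1 ^ 2 - 2 * 1 * cos (2 * π * l / n + π / n)) ^ ((3 : ℝ) / 2) = f l / 4 := by
    rw [show 2 * π * l / n + π / n = 2 * (π * (2 * l + 1) / (2 * n)) by ring]
    norm_num [one_sub_cos_two_mul_div_rpow, f]
    ring
  have hperiodic : f n = f 0 := by
    rcases eq_or_ne n 0 with rfl | hn
    · rfl
    · have : π * (2 * n + 1) / (2 * n) = π * (2 * (0 : ℕ) + 1) / (2 * n) + π := by
        push_cast
        field_simp
        ring
      simp only [f, this, sin_add_pi, abs_neg]
  rw [hN, sum_congr rfl fun l _ => hterm l, ← sum_div, sum_Icc_one_eq_sum_range hperiodic,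
    oddCscSum]
  ring

theorem kN_one_pi_div (n : ℕ) : kN n 1 (π / n) = 2 * deltaN (2 * n) - deltaN n := by
  rw [kN, hN_one_pi_div, deltaN_eq_cscSum, deltaN_eq_cscSum, cscSum_two_mul]
  push_cast
  ring

theorem deltaN_sq_sub_kN_sq_general (n : ℕ) :
    deltaN n ^ 2 - kN n 1 (Real.pi / n) ^ 2 =
      -4 * deltaN (2 * n) * (deltaN (2 * n) - deltaN n) := by
  rw [kN_one_pi_div]
  ring

/-- `δ_n² − k_n(1,π/n)² = −4·δ_{2n}·(δ_{2n} − δ_n)`. -/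
theorem deltaN_sq_sub_kN_sq (n : ℕ) (hn : 2 ≤ n) :
    deltaN n ^ 2 - kN n 1 (Real.pi / n) ^ 2 =
      -4 * deltaN (2 * n) * (deltaN (2 * n) - deltaN n) :=
  deltaN_sq_sub_kN_sq_general n
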